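/- Let d ≥ 2, k ≥ 3 and let X_1,…,X_d be formal variables. With C = {u ∈ ℤ≥0^d : k·u_i ≥ u_d for i = 1,…,d−1}, the generating function ∑_{y ∈ C} X_1^{y_1}⋯X_d^{y_d} equals (1 + X_1⋯X_d·(1 + X_d + ⋯ + X_d^{k−2})) / ((1−X_1)⋯(1−X_{d−1})·(1 − X_1⋯X_{d−1}X_d^k)) as formal power series (or for |X_i| < 1). -/

import Mathlib

open scoped Classical

/-- The multivariate power series `∑_{y ∈ C} X₁^{y₁}⋯X_d^{y_d}` over the lattice
points of the cone `C = {y ∈ ℤ≥0^d : k·yᵢ ≥ y_d for i = 1,…,d−1}`. -/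
noncomputable def coneSeries (d k : ℕ) (hd : 2 ≤ d) : MvPowerSeries (Fin d) ℚ :=
  fun y : Fin d →₀ ℕ =>
    if ∀ i : Fin d, i.val < d - 1 → y ⟨d - 1, by omega⟩ ≤ k * y i then 1 else 0

/-!
Multiplying the indicator series of a set `S ⊆ ℕ^σ` with `S + w ⊆ S` by `1 - X^w` leaves the
indicator series of `S \ (S + w)`. Taking `w = eᵢ` for every `i ≠ e` (where `e` is the last
coordinate) cuts the cone `{y | y_e ≤ k yᵢ}` down to the points with `yᵢ = ⌈y_e / k⌉` for all
`i ≠ e`. This set is invariant under translation by `w = (1,…,1,k)`, and taking that `w` once more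
leaves only `0` and the points `(1,…,1,m)` with `1 ≤ m ≤ k - 1`, whose generating function is the
numerator.
-/

open Finset

theorem Finsupp.mem_image_add_right_iff {σ : Type*} {S : Set (σ →₀ ℕ)} {w y : σ →₀ ℕ} :
    y ∈ (· + w) '' S ↔ w ≤ y ∧ y - w ∈ S := by
  constructor
  · rintro ⟨z, hz, rfl⟩
    simpa using hz
  · rintro ⟨hwy, hyw⟩
    exact ⟨y - w, hyw, tsub_add_cancel_of_le hwy⟩

section Cone

open Finsupp

variable {σ : Type*}

def cone (k : ℕ) (e : σ) : Set (σ →₀ ℕ) :=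
  {y | ∀ i ≠ e, y e ≤ k * y i}

-- For `y ∈ cone k e`, the condition `k * y i < y e + k` says that `y i = ⌈y e / k⌉`, the least
-- value allowed by the cone.
def coneSlab (k : ℕ) (e : σ) (J : Finset σ) : Set (σ →₀ ℕ) :=
  {y | y ∈ cone k e ∧ ∀ i ∈ J, k * y i < y e + k}

variable {k : ℕ} {e j : σ} {J : Finset σ} {y : σ →₀ ℕ}

theorem coneSlab_empty : coneSlab k e ∅ = cone k e := by
  simp [coneSlab]

theorem mem_coneSlab_insert [DecidableEq σ] :
    y ∈ coneSlab k e (insert j J) ↔ y ∈ coneSlab k e J ∧ k * y j < y e + k := by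
  simp only [coneSlab, Set.mem_ofPred_eq, Finset.forall_mem_insert]
  tauto

theorem add_single_mem_coneSlab (hje : j ≠ e) (hjJ : j ∉ J) (hy : y ∈ coneSlab k e J) :
    y + single j 1 ∈ coneSlab k e J := by
  obtain ⟨hcone, hJ⟩ := hy
  have he : (y + single j 1 : σ →₀ ℕ) e = y e := by simp [single_eq_of_ne hje.symm]
  refine ⟨fun i hi => ?_, fun i hi => ?_⟩
  · rw [he]
    exact (hcone i hi).trans (Nat.mul_le_mul_left k (le_def.1 le_self_add i))
  · have hij : i ≠ j := by rintro rfl; exact hjJ hi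
    rw [he, Finsupp.add_apply, single_eq_of_ne hij, add_zero]
    exact hJ i hi

theorem sub_single_mem_coneSlab_iff (hk : 0 < k) (hje : j ≠ e) (hjJ : j ∉ J)
    (hy : y ∈ coneSlab k e J) :
    1 ≤ y j ∧ y - single j 1 ∈ coneSlab k e J ↔ y e + k ≤ k * y j := by
  have he : (y - single j 1 : σ →₀ ℕ) e = y e := by simp [single_eq_of_ne hje.symm]
  have hj : (y - single j 1 : σ →₀ ℕ) j = y j - 1 := by simp
  have hi : ∀ i ≠ j, (y - single j 1 : σ →₀ ℕ) i = y i := fun i hij => by simp [single_eq_of_ne hij]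
  constructor
  · rintro ⟨hyj, hcone, -⟩
    have := hcone j hje
    rw [he, hj, Nat.mul_sub_one] at this
    have : k ≤ k * y j := Nat.le_mul_of_pos_right k hyj
    omega
  · intro h
    have hyj : 1 ≤ y j := Nat.pos_of_ne_zero fun h0 => by simp [h0] at h; omega
    refine ⟨hyj, fun i hie => ?_, fun i hiJ => ?_⟩
    · rw [he]
      by_cases hij : i = j
      · subst hij
        rw [hj, Nat.mul_sub_one]
        omega
      · rw [hi i hij]
        exact hy.1 i hie
    · have hij : i ≠ j := by rintro rfl; exact hjJ hiJ
      rw [he, hi i hij]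
      exact hy.2 i hiJ

theorem coneSlab_insert [DecidableEq σ] (hk : 0 < k) (hje : j ≠ e) (hjJ : j ∉ J) :
    coneSlab k e (insert j J) = coneSlab k e J \ (· + single j 1) '' coneSlab k e J := by
  ext y
  rw [Set.mem_sdiff, mem_image_add_right_iff, single_le_iff, mem_coneSlab_insert]
  refine and_congr_right fun hy => ?_
  rw [sub_single_mem_coneSlab_iff hk hje hjJ hy]
  omega

theorem mem_coneSlab_univ_erase [Fintype σ] [DecidableEq σ] :
    y ∈ coneSlab k e (univ.erase e) ↔ ∀ i ≠ e, y e ≤ k * y i ∧ k * y i < y e + k := by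
  simp only [coneSlab, cone, Set.mem_ofPred_eq, Finset.mem_erase, Finset.mem_univ, and_true]
  exact forall_and.symm.trans (forall_congr' fun i => imp_and.symm)

section Translation

variable [Fintype σ] [DecidableEq σ] {w : σ →₀ ℕ} (hwe : w e = k) (hw : ∀ i ≠ e, w i = 1)
include hwe hw

theorem add_mem_coneSlab_univ_erase (hy : y ∈ coneSlab k e (univ.erase e)) :
    y + w ∈ coneSlab k e (univ.erase e) := by
  rw [mem_coneSlab_univ_erase] at hy ⊢
  intro i hi
  simp only [Finsupp.add_apply, hwe, hw i hi, Nat.mul_add_one]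
  have := hy i hi
  omega

theorem mem_image_add_iff_of_mem_coneSlab_univ_erase (hk : 0 < k)
    (hy : y ∈ coneSlab k e (univ.erase e)) :
    y ∈ (· + w) '' coneSlab k e (univ.erase e) ↔ k ≤ y e := by
  rw [mem_image_add_right_iff]
  rw [mem_coneSlab_univ_erase] at hy
  constructor
  · rintro ⟨hwy, -⟩
    exact hwe ▸ le_def.1 hwy e
  · intro hky
    have hpos : ∀ i ≠ e, 1 ≤ y i := fun i hi =>
      Nat.pos_of_ne_zero fun h0 => by have := (hy i hi).1; simp [h0] at this; omega
    refine ⟨le_def.2 fun i => ?_, mem_coneSlab_univ_erase.2 fun i hi => ?_⟩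
    · by_cases hi : i = e
      · subst hi; omega
      · rw [hw i hi]; exact hpos i hi
    · simp only [Finsupp.tsub_apply, hwe, hw i hi, Nat.mul_sub_one]
      have := hy i hi
      have : k ≤ k * y i := Nat.le_mul_of_pos_right k (hpos i hi)
      omega

theorem coneSlab_univ_erase_sdiff_image (hk : 0 < k) {u : σ →₀ ℕ} (hu : ∀ i, u i = 1) :
    coneSlab k e (univ.erase e) \ (· + w) '' coneSlab k e (univ.erase e) =
      insert 0 ((fun j => u + single e j) '' Set.Iio (k - 1)) := by
  ext y
  rw [Set.mem_sdiff, Set.mem_insert_iff]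
  constructor
  · rintro ⟨hy, hny⟩
    rw [mem_image_add_iff_of_mem_coneSlab_univ_erase hwe hw hk hy, not_le] at hny
    rw [mem_coneSlab_univ_erase] at hy
    rcases Nat.eq_zero_or_pos (y e) with h0 | hpos
    · left
      ext i
      by_cases hi : i = e
      · subst hi; simpa using h0
      · have : k * y i < k * 1 := by have := (hy i hi).2; omega
        simpa using Nat.lt_of_mul_lt_mul_left this
    · right
      refine ⟨y e - 1, by simp; omega, ?_⟩
      ext i
      by_cases hi : i = e
      · subst hi; simp [hu]; omega
      · have hyi : 1 ≤ y i := Nat.pos_of_ne_zero fun h0 => by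
          have := (hy i hi).1; simp [h0] at this; omega
        have : y i < 2 := Nat.lt_of_mul_lt_mul_left (a := k) (by have := (hy i hi).2; omega)
        simp [hu, single_eq_of_ne hi]
        omega
  · rintro (rfl | ⟨j, hj, rfl⟩)
    · have hy : (0 : σ →₀ ℕ) ∈ coneSlab k e (univ.erase e) :=
        mem_coneSlab_univ_erase.2 fun i _ => by simpa using hk
      refine ⟨hy, (mem_image_add_iff_of_mem_coneSlab_univ_erase hwe hw hk hy).not.2 ?_⟩
      simpa using hk.ne'
    · have hy : u + single e j ∈ coneSlab k e (univ.erase e) :=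
        mem_coneSlab_univ_erase.2 fun i hi => by
          simp only [Set.mem_Iio] at hj
          simp [hu, single_eq_of_ne hi]
          omega
      refine ⟨hy, (mem_image_add_iff_of_mem_coneSlab_univ_erase hwe hw hk hy).not.2 ?_⟩
      simp only [Set.mem_Iio] at hj
      simp [hu]
      omega

end Translation

end Cone

namespace MvPowerSeries

open Finsupp

variable {σ R : Type*} [CommRing R] {k : ℕ}

variable (R) in
noncomputable def setSeries (S : Set (σ →₀ ℕ)) : MvPowerSeries σ R :=
  S.indicator 1

theorem coeff_setSeries (S : Set (σ →₀ ℕ)) (y : σ →₀ ℕ) :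
    coeff y (setSeries R S) = S.indicator 1 y :=
  rfl

theorem setSeries_finset (s : Finset (σ →₀ ℕ)) :
    setSeries R (s : Set (σ →₀ ℕ)) = ∑ y ∈ s, monomial y 1 := by
  ext y
  simp [coeff_setSeries, coeff_monomial, Set.indicator_apply]

theorem one_sub_monomial_mul_setSeries {S : Set (σ →₀ ℕ)} {w : σ →₀ ℕ}
    (hS : ∀ y ∈ S, y + w ∈ S) :
    (1 - monomial w 1) * setSeries R S = setSeries R (S \ (· + w) '' S) := by
  ext y
  rw [sub_mul, one_mul, map_sub, coeff_monomial_mul, coeff_setSeries, coeff_setSeries,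
    coeff_setSeries]
  simp only [Set.indicator_apply, Set.mem_sdiff, Finsupp.mem_image_add_right_iff, Pi.one_apply]
  have hyS : w ≤ y → y - w ∈ S → y ∈ S := fun hwy h => tsub_add_cancel_of_le hwy ▸ hS _ h
  split_ifs <;> simp_all

theorem prod_X_eq_monomial (s : Finset σ) :
    ∏ i ∈ s, (X i : MvPowerSeries σ R) = monomial (∑ i ∈ s, Finsupp.single i 1) 1 := by
  simp_rw [X_def, prod_monomial, prod_const_one]

theorem prod_one_sub_X_mul_setSeries_cone [DecidableEq σ] (hk : 0 < k) {e : σ} {J : Finset σ}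
    (heJ : e ∉ J) :
    (∏ i ∈ J, (1 - X i)) * setSeries R (cone k e) = setSeries R (coneSlab k e J) := by
  induction J using Finset.induction_on with
  | empty => rw [prod_empty, one_mul, coneSlab_empty]
  | insert j J hjJ ih =>
    have hje : j ≠ e := fun h => heJ (h ▸ mem_insert_self j J)
    rw [prod_insert hjJ, mul_assoc, ih (fun h => heJ (mem_insert_of_mem h)), X_def,
      one_sub_monomial_mul_setSeries fun y => add_single_mem_coneSlab hje hjJ,
      coneSlab_insert hk hje hjJ]

theorem denominator_mul_setSeries_cone [Fintype σ] [DecidableEq σ] (hk : 0 < k) (e : σ) :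
    (∏ i ∈ univ.erase e, (1 - X i)) * (1 - (∏ i ∈ univ.erase e, X i) * X e ^ k) *
        setSeries R (cone k e) =
      1 + (∏ i, X i) * ∑ j ∈ range (k - 1), X e ^ j := by
  set u : σ →₀ ℕ := ∑ i, single i 1
  set w : σ →₀ ℕ := ∑ i ∈ univ.erase e, single i 1 + single e k
  have hu : ∀ i, u i = 1 := by simp [u, single_apply]
  have hwe : w e = k := by simp [w, single_apply]
  have hw : ∀ i ≠ e, w i = 1 := fun i hi => by
    simp [w, single_apply, hi, eq_comm]
  have hden : (∏ i ∈ univ.erase e, X i) * X e ^ k = (monomial w 1 : MvPowerSeries σ R) := by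
    rw [prod_X_eq_monomial, X_pow_eq, monomial_mul_monomial, one_mul]
  have hnum : 1 + (∏ i, X i) * ∑ j ∈ range (k - 1), X e ^ j =
      setSeries R ↑(insert 0 ((range (k - 1)).image fun j => u + single e j)) := by
    rw [setSeries_finset, sum_insert, sum_image, prod_X_eq_monomial, Finset.mul_sum,
      monomial_zero_one]
    · simp_rw [X_pow_eq, monomial_mul_monomial, one_mul, u]
    · exact fun _ _ _ _ h => single_injective e (add_left_cancel h)
    · simp only [mem_image, not_exists, not_and]
      exact fun j _ h => by simpa [hu] using DFunLike.congr_fun h e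
  rw [mul_right_comm, prod_one_sub_X_mul_setSeries_cone hk (notMem_erase e univ), mul_comm, hden,
    one_sub_monomial_mul_setSeries fun y => add_mem_coneSlab_univ_erase hwe hw,
    coneSlab_univ_erase_sdiff_image hwe hw hk hu, hnum, coe_insert, coe_image, coe_range]

end MvPowerSeries

theorem Fin.val_lt_sub_one_iff_ne {d : ℕ} (hd : 0 < d) (i : Fin d) :
    i.val < d - 1 ↔ i ≠ ⟨d - 1, by omega⟩ := by
  rw [Ne, Fin.ext_iff]
  have := i.isLt
  simp only
  omega

open MvPowerSeries in
theorem coneSeries_eq_setSeries_cone (d k : ℕ) (hd : 2 ≤ d) :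
    coneSeries d k hd = setSeries ℚ (cone k ⟨d - 1, by omega⟩) := by
  ext y
  rw [coeff_setSeries, Set.indicator_apply]
  exact if_congr (forall_congr' fun i => imp_congr_left (Fin.val_lt_sub_one_iff_ne (by omega) i))
    rfl rfl

/-- As formal power series,
`(1−X₁)⋯(1−X_{d−1})·(1 − X₁⋯X_{d−1}X_d^k) · ∑_{y∈C} X^y
  = 1 + X₁⋯X_d·(1 + X_d + ⋯ + X_d^{k−2})`. -/
theorem stmt2 (d k : ℕ) (hd : 2 ≤ d) (hk : 3 ≤ k) :
    ((∏ i ∈ Finset.univ.filter (fun i : Fin d => i.val < d - 1),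
          (1 - MvPowerSeries.X i)) *
        (1 - (∏ i ∈ Finset.univ.filter (fun i : Fin d => i.val < d - 1),
            MvPowerSeries.X i) * (MvPowerSeries.X (⟨d - 1, by omega⟩ : Fin d)) ^ k)) *
      coneSeries d k hd =
    1 + (∏ i : Fin d, MvPowerSeries.X i) *
      ∑ j ∈ Finset.range (k - 1),
        (MvPowerSeries.X (⟨d - 1, by omega⟩ : Fin d) : MvPowerSeries (Fin d) ℚ) ^ j := by
  rw [filter_congr fun i _ => Fin.val_lt_sub_one_iff_ne (by omega) i, filter_ne',
    coneSeries_eq_setSeries_cone]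
  exact MvPowerSeries.denominator_mul_setSeries_cone (by omega) _
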